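/- Under the enforceability condition, the state reached by the enforcer output never equals the violating state: for the function E* defined by the enforcement algorithm, for all σ ∈ Σ*, the unique state q reached from q0 on E*(σ) in the deterministic complete safety automaton A_φ satisfies q ≠ qv. -/
import Mathlib


/-- Extension of a transition relation to words. -/
def TrW {Q A : Type} (Tr : Q → A → Q → Prop) : Q → List A → Q → Prop
  | q, [], q' => q = q'
  | q, a :: w, q' => ∃ q'', Tr q a q'' ∧ TrW Tr q'' w q'

/-- Input-edit set. -/
def editI {Q SI SO : Type} (qv : Q) (Tr : Q → SI × SO → Q → Prop) (q : Q) : Set SI :=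
  {x | ∃ q', q' ≠ qv ∧ ∃ y, Tr q (x, y) q'}

/-- Output-edit set. -/
def editO {Q SI SO : Type} (qv : Q) (Tr : Q → SI × SO → Q → Prop) (q : Q) (x : SI) : Set SO :=
  {y | ∃ q', q' ≠ qv ∧ Tr q (x, y) q'}


theorem TrW_det {Q A : Type} (Tr : Q → A → Q → Prop)
    (hdet : ∀ q a q' q'', Tr q a q' → Tr q a q'' → q' = q'') :
    ∀ (w : List A) (q q' q'' : Q), TrW Tr q w q' → TrW Tr q w q'' → q' = q''
  | [], q, q', q'', h1, h2 => h1 ▸ h2 ▸ rfl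
  | a :: w, q, q', q'', ⟨p1, h1, h1'⟩, ⟨p2, h2, h2'⟩ => by
    cases hdet q a p1 p2 h1 h2
    exact TrW_det Tr hdet w p1 q' q'' h1' h2'

theorem TrW_total {Q A : Type} (Tr : Q → A → Q → Prop)
    (hcomp : ∀ q a, ∃ q', Tr q a q') :
    ∀ (w : List A) (q : Q), ∃ q', TrW Tr q w q'
  | [], q => ⟨q, rfl⟩
  | a :: w, q => by
    obtain ⟨p, hp⟩ := hcomp q a
    obtain ⟨q', hq'⟩ := TrW_total Tr hcomp w p
    exact ⟨q', p, hp, hq'⟩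

theorem TrW_append {Q A : Type} (Tr : Q → A → Q → Prop) :
    ∀ (w v : List A) (q q' : Q), TrW Tr q (w ++ v) q' →
      ∃ p, TrW Tr q w p ∧ TrW Tr p v q'
  | [], v, q, q', h => ⟨q, rfl, h⟩
  | a :: w, v, q, q', ⟨p, hp, h⟩ => by
    obtain ⟨m, hm1, hm2⟩ := TrW_append Tr w v p q' h
    exact ⟨m, ⟨p, hp, hm1⟩, hm2⟩

/-- the state reached on the enforcer output is never the
violating state. -/
theorem stmt_9 {Q SI SO : Type} (q0 qv : Q)
    (Tr : Q → SI × SO → Q → Prop)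
    (hdet : ∀ q a q' q'', Tr q a q' → Tr q a q'' → q' = q'')
    (hcomp : ∀ q a, ∃ q', Tr q a q')
    (htrap : ∀ a q', Tr qv a q' → q' = qv)
    (hq0 : q0 ≠ qv)
    (henfco : ∀ q : Q, q ≠ qv → ∃ a : SI × SO, ∃ q', Tr q a q' ∧ q' ≠ qv)
    (E : List (SI × SO) → List (SI × SO))
    (hE0 : E [] = [])
    (hstep : ∀ (σ : List (SI × SO)) (x : SI) (y : SO) (q : Q), TrW Tr q0 (E σ) q →
      ∃ (x' : SI) (y' : SO),
        (x ∈ editI qv Tr q → x' = x) ∧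
        (x ∉ editI qv Tr q → x' ∈ editI qv Tr q) ∧
        (y ∈ editO qv Tr q x' → y' = y) ∧
        (y ∉ editO qv Tr q x' → y' ∈ editO qv Tr q x') ∧
        E (σ ++ [(x, y)]) = E σ ++ [(x', y')]) :
    ∀ σ (q : Q), TrW Tr q0 (E σ) q → q ≠ qv := by
  intro σ
  induction σ using List.reverseRecOn with
  | nil =>
    intro q h
    rw [hE0] at h
    exact h ▸ hq0
  | append_singleton σ xy ih =>
    obtain ⟨x, y⟩ := xy
    intro q h
    obtain ⟨q1, hq1⟩ := TrW_total Tr hcomp (E σ) q0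
    have hq1v : q1 ≠ qv := ih q1 hq1
    obtain ⟨x', y', hx1, hx2, hy1, hy2, heq⟩ := hstep σ x y q1 hq1
    rw [heq] at h
    obtain ⟨p, hp1, hp2⟩ := TrW_append Tr (E σ) [(x', y')] q0 q h
    cases TrW_det Tr hdet (E σ) q0 p q1 hp1 hq1
    obtain ⟨r, hr, hr2⟩ := hp2
    cases hr2
    have hy' : y' ∈ editO qv Tr q1 x' := by
      by_cases hy : y ∈ editO qv Tr q1 x'
      · rw [hy1 hy]; exact hy
      · exact hy2 hy
    obtain ⟨q', hq'v, hq'tr⟩ := hy'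
    cases hdet q1 (x', y') q q' hr hq'tr
    exact hq'v
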